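/- arXiv:2412.17168 — 3 statements merged into one kernel-verified Lean document; each statement's English description precedes it below -/
import Mathlib

section
/- Let g be a Lie algebra over a field of characteristic zero with structure constants f (i.e., [t_a, t_b] = f_{ab}^c t_c) and an invariant symmetric bilinear form K. Define K_{ab}^{d_1 ⋯ d_{m+1}} = -f_{a e_1}^{d_1} K^{e_1 e_2} f_{e_2 e_3}^{d_2} ⋯ f_{e_{2m-2} e_{2m-1}}^{d_m} K^{e_{2m-1} e_{2m}} f_{e_{2m} b}^{d_{m+1}}. Then for all m ≥ 1, the identity K_{e a}^{d_1 ⋯ d_{m+1}} f_{cb}^{e} = K_{ba}^{e d_2 ⋯ d_{m+1}} f_{c e}^{d_1} + ⋯ + K_{ba}^{d_1 ⋯ d_m e} f_{c e}^{d_{m+1}} + K_{b e}^{d_1 ⋯ d_{m+1}} f_{a c}^{e} holds (with implicit summation over repeated indices e). -/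
noncomputable section

/-- The chain `P_{ab}^{d₁⋯d_{n+1}} = f_{a e₁}^{d₁} K^{e₁ e₂} f_{e₂ e₃}^{d₂} ⋯ f_{e_{2n} b}^{d_{n+1}}`
(summation over the internal indices `eᵢ`), built by alternating structure constants `f` with
copies of the (inverse) invariant form `K`. -/
def chainP {k ι : Type*} [Field k] [Fintype ι]
    (f : ι → ι → ι → k) (K : ι → ι → k) :
    (n : ℕ) → ι → ι → (Fin (n + 1) → ι) → k
  | 0, a, b, ds => f a b (ds 0)
  | n + 1, a, b, ds =>
      ∑ e₁ : ι, ∑ e₂ : ι, f a e₁ (ds 0) * K e₁ e₂ * chainP f K n e₂ b (fun i => ds i.succ)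



private lemma rot3 {k : Type*} [AddCommMonoid k] {α β γ : Type*} [Fintype α] [Fintype β]
    [Fintype γ] (g : α → β → γ → k) :
    ∑ a : α, ∑ b : β, ∑ c : γ, g a b c = ∑ c : γ, ∑ a : α, ∑ b : β, g a b c :=
  (Finset.sum_congr rfl fun _ _ => Finset.sum_comm).trans Finset.sum_comm

private lemma rev3 {k : Type*} [AddCommMonoid k] {α β γ : Type*} [Fintype α] [Fintype β]
    [Fintype γ] (g : α → β → γ → k) :
    ∑ a : α, ∑ b : β, ∑ c : γ, g a b c = ∑ c : γ, ∑ b : β, ∑ a : α, g a b c :=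
  (rot3 g).trans (Finset.sum_congr rfl fun _ _ => Finset.sum_comm)

private lemma swap4 {k : Type*} [AddCommMonoid k] {α β γ δ : Type*} [Fintype α] [Fintype β]
    [Fintype γ] [Fintype δ] (g : α → β → γ → δ → k) :
    ∑ a : α, ∑ b : β, ∑ c : γ, ∑ d : δ, g a b c d
      = ∑ c : γ, ∑ d : δ, ∑ a : α, ∑ b : β, g a b c d :=
  calc ∑ a : α, ∑ b : β, ∑ c : γ, ∑ d : δ, g a b c d
      = ∑ a : α, ∑ c : γ, ∑ b : β, ∑ d : δ, g a b c d :=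
        Finset.sum_congr rfl fun _ _ => Finset.sum_comm
    _ = ∑ c : γ, ∑ a : α, ∑ b : β, ∑ d : δ, g a b c d := Finset.sum_comm
    _ = ∑ c : γ, ∑ d : δ, ∑ a : α, ∑ b : β, g a b c d :=
        Finset.sum_congr rfl fun c _ => rot3 (fun a b d => g a b c d)

theorem auxP {k ι : Type*} [Field k] [Fintype ι] [DecidableEq ι]
    (f : ι → ι → ι → k) (K : ι → ι → k)
    (hanti : ∀ a b c, f a b c = - f b a c)
    (hjac : ∀ a b c e,
      ∑ d : ι, (f a d e * f b c d + f b d e * f c a d + f c d e * f a b d) = 0)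
    (hinv : ∀ a b c, (∑ e : ι, f e c a * K e b) + (∑ e : ι, f e c b * K a e) = 0)
    (m : ℕ) :
    ∀ (a b c : ι) (ds : Fin (m + 1) → ι),
    ∑ e : ι, chainP f K m e a ds * f c b e
      = (∑ j : Fin (m + 1), ∑ e : ι,
          chainP f K m b a (Function.update ds j e) * f c e (ds j))
        + ∑ e : ι, chainP f K m b e ds * f a c e := by
  have S0 : ∀ a b c d : ι, ∑ e : ι, f e a d * f c b e
      = (∑ e : ι, f b a e * f c e d) + ∑ e : ι, f b e d * f a c e := by
    intro a b c d
    have h := hjac a c b d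
    have h2 : ∑ e : ι, (f e a d * f c b e - f b a e * f c e d - f b e d * f a c e)
        = -∑ x : ι, (f a x d * f c b x + f c x d * f b a x + f b x d * f a c x) := by
      rw [← Finset.sum_neg_distrib]
      refine Finset.sum_congr rfl fun x _ => ?_
      rw [hanti x a d]
      ring
    rw [h] at h2
    simp only [Finset.sum_sub_distrib, neg_zero] at h2
    linear_combination h2
  have hinv' : ∀ c e e₂ : ι, (∑ e₁ : ι, f e₁ c e * K e₁ e₂) = ∑ x : ι, f c x e₂ * K e x := by
    intro c e e₂
    have h2 : ∑ x : ι, f c x e₂ * K e x = -∑ x : ι, f x c e₂ * K e x := by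
      rw [← Finset.sum_neg_distrib]
      exact Finset.sum_congr rfl fun x _ => by rw [hanti x c e₂]; ring
    rw [h2]
    linear_combination hinv e e₂ c
  induction m with
  | zero =>
    intro a b c ds
    simp only [chainP, Fin.sum_univ_succ, Finset.univ_eq_empty, Finset.sum_empty, add_zero,
      Function.update_self]
    exact S0 a b c (ds 0)
  | succ n ih =>
    intro a b c ds
    have htail0 : ∀ e : ι, (fun i : Fin (n + 1) => Function.update ds 0 e i.succ)
        = fun i => ds i.succ := by
      intro e; funext i
      exact Function.update_of_ne (Fin.succ_ne_zero i) _ _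
    have htails : ∀ (j : Fin (n + 1)) (e : ι),
        (fun i : Fin (n + 1) => Function.update ds j.succ e i.succ)
          = Function.update (fun i => ds i.succ) j e := by
      intro j e; funext i
      by_cases h : i = j
      · subst h; simp
      · rw [Function.update_of_ne (fun hh => h (Fin.succ_injective _ hh)) _ _,
          Function.update_of_ne h _ _]
    simp only [chainP]
    rw [Fin.sum_univ_succ]
    simp only [htail0, htails, Function.update_self,
      Function.update_of_ne (Fin.succ_ne_zero _).symm]
    have EqA : (∑ e₁ : ι, ∑ e₂ : ι, K e₁ e₂ * chainP f K n e₂ a (fun i => ds i.succ)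
          * ∑ x : ι, f b e₁ x * f c x (ds 0))
        = ∑ x : ι, (∑ e₁ : ι, ∑ e₂ : ι,
            f b e₁ x * K e₁ e₂ * chainP f K n e₂ a (fun i => ds i.succ)) * f c x (ds 0) := by
      simp only [Finset.sum_mul, Finset.mul_sum]
      symm
      rw [Finset.sum_comm]
      refine Finset.sum_congr rfl fun e₁ _ => ?_
      rw [Finset.sum_comm]
      exact Finset.sum_congr rfl fun e₂ _ => Finset.sum_congr rfl fun x _ => by ring
    have EqB : (∑ e₁ : ι, ∑ e₂ : ι, K e₁ e₂ * chainP f K n e₂ a (fun i => ds i.succ)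
          * ∑ x : ι, f b x (ds 0) * f e₁ c x)
        = (∑ j : Fin (n + 1), ∑ e : ι,
            (∑ x : ι, ∑ z : ι, f b x (ds 0) * K x z
              * chainP f K n z a (Function.update (fun i => ds i.succ) j e)) * f c e (ds j.succ))
          + ∑ e : ι, (∑ x : ι, ∑ z : ι, f b x (ds 0) * K x z
              * chainP f K n z e (fun i => ds i.succ)) * f a c e := by
      calc (∑ e₁ : ι, ∑ e₂ : ι, K e₁ e₂ * chainP f K n e₂ a (fun i => ds i.succ)
              * ∑ x : ι, f b x (ds 0) * f e₁ c x)
          = ∑ x : ι, f b x (ds 0) * ∑ e₂ : ι,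
              (∑ e₁ : ι, f e₁ c x * K e₁ e₂) * chainP f K n e₂ a (fun i => ds i.succ) := by
            simp only [Finset.sum_mul, Finset.mul_sum]
            rw [rev3]
            exact Finset.sum_congr rfl fun x _ => Finset.sum_congr rfl fun e₂ _ =>
              Finset.sum_congr rfl fun e₁ _ => by ring
        _ = ∑ x : ι, f b x (ds 0) * ∑ e₂ : ι,
              (∑ z : ι, f c z e₂ * K x z) * chainP f K n e₂ a (fun i => ds i.succ) := by
            refine Finset.sum_congr rfl fun x _ => ?_
            exact congrArg _ (Finset.sum_congr rfl fun e₂ _ => by rw [hinv' c x e₂])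
        _ = ∑ x : ι, f b x (ds 0) * ∑ z : ι, K x z * ∑ e₂ : ι,
              chainP f K n e₂ a (fun i => ds i.succ) * f c z e₂ := by
            refine Finset.sum_congr rfl fun x _ => congrArg _ ?_
            simp only [Finset.sum_mul, Finset.mul_sum]
            rw [Finset.sum_comm]
            exact Finset.sum_congr rfl fun z _ => Finset.sum_congr rfl fun e₂ _ => by ring
        _ = ∑ x : ι, f b x (ds 0) * ∑ z : ι, K x z *
              ((∑ j : Fin (n + 1), ∑ e : ι,
                  chainP f K n z a (Function.update (fun i => ds i.succ) j e)
                    * f c e (ds j.succ))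
                + ∑ e : ι, chainP f K n z e (fun i => ds i.succ) * f a c e) := by
            refine Finset.sum_congr rfl fun x _ => congrArg _ ?_
            refine Finset.sum_congr rfl fun z _ => congrArg _ ?_
            exact ih a z c (fun i => ds i.succ)
        _ = (∑ j : Fin (n + 1), ∑ e : ι,
              (∑ x : ι, ∑ z : ι, f b x (ds 0) * K x z
                * chainP f K n z a (Function.update (fun i => ds i.succ) j e))
                  * f c e (ds j.succ))
            + ∑ e : ι, (∑ x : ι, ∑ z : ι, f b x (ds 0) * K x z
                * chainP f K n z e (fun i => ds i.succ)) * f a c e := by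
            simp only [mul_add, Finset.mul_sum, Finset.sum_mul, Finset.sum_add_distrib]
            congr 1
            · rw [swap4]
              exact Finset.sum_congr rfl fun j _ => Finset.sum_congr rfl fun e _ =>
                Finset.sum_congr rfl fun x _ => Finset.sum_congr rfl fun z _ => by ring
            · rw [rot3]
              exact Finset.sum_congr rfl fun e _ => Finset.sum_congr rfl fun x _ =>
                Finset.sum_congr rfl fun z _ => by ring
    calc ∑ x : ι, (∑ e₁ : ι, ∑ e₂ : ι,
            f x e₁ (ds 0) * K e₁ e₂ * chainP f K n e₂ a (fun i => ds i.succ)) * f c b x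
        = ∑ e₁ : ι, ∑ e₂ : ι, K e₁ e₂ * chainP f K n e₂ a (fun i => ds i.succ)
            * ∑ x : ι, f x e₁ (ds 0) * f c b x := by
          simp only [Finset.sum_mul, Finset.mul_sum]
          rw [Finset.sum_comm]
          refine Finset.sum_congr rfl fun e₁ _ => ?_
          rw [Finset.sum_comm]
          exact Finset.sum_congr rfl fun e₂ _ => Finset.sum_congr rfl fun x _ => by ring
      _ = ∑ e₁ : ι, ∑ e₂ : ι, K e₁ e₂ * chainP f K n e₂ a (fun i => ds i.succ)
            * ((∑ x : ι, f b e₁ x * f c x (ds 0)) + ∑ x : ι, f b x (ds 0) * f e₁ c x) :=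
          Finset.sum_congr rfl fun e₁ _ => Finset.sum_congr rfl fun e₂ _ => by
            rw [S0 e₁ b c (ds 0)]
      _ = (∑ e₁ : ι, ∑ e₂ : ι, K e₁ e₂ * chainP f K n e₂ a (fun i => ds i.succ)
            * ∑ x : ι, f b e₁ x * f c x (ds 0))
          + ∑ e₁ : ι, ∑ e₂ : ι, K e₁ e₂ * chainP f K n e₂ a (fun i => ds i.succ)
            * ∑ x : ι, f b x (ds 0) * f e₁ c x := by
          simp only [mul_add, Finset.sum_add_distrib]
      _ = _ := by
          rw [EqA, EqB]
          ring

/-- `K_{ab}^{d₁⋯d_{n+1}} = - f_{a e₁}^{d₁} K^{e₁ e₂} f_{e₂ e₃}^{d₂} ⋯ K^{e_{2n-1} e_{2n}} f_{e_{2n} b}^{d_{n+1}}`. -/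
def chainK {k ι : Type*} [Field k] [Fintype ι]
    (f : ι → ι → ι → k) (K : ι → ι → k) (n : ℕ) (a b : ι) (ds : Fin (n + 1) → ι) : k :=
  - chainP f K n a b ds

/-- For a Lie algebra over a field of characteristic zero with antisymmetric structure constants
`f` satisfying the Jacobi identity, and an invariant symmetric bilinear (inverse) form `K`, the
chain tensor satisfies, for all `m ≥ 1`,
`K_{ea}^{d₁⋯d_{m+1}} f_{cb}^e = Σ_j K_{ba}^{d₁⋯e⋯d_{m+1}} f_{ce}^{d_j} + K_{be}^{d₁⋯d_{m+1}} f_{ac}^e`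
(summation over repeated indices `e`). -/
theorem chain_ad_invariance {k ι : Type*} [Field k] [CharZero k] [Fintype ι] [DecidableEq ι]
    (f : ι → ι → ι → k) (K : ι → ι → k)
    (hanti : ∀ a b c, f a b c = - f b a c)
    (hjac : ∀ a b c e,
      ∑ d : ι, (f a d e * f b c d + f b d e * f c a d + f c d e * f a b d) = 0)
    (hsym : ∀ a b, K a b = K b a)
    (hinv : ∀ a b c, (∑ e : ι, f e c a * K e b) + (∑ e : ι, f e c b * K a e) = 0)
    (m : ℕ) (hm : 1 ≤ m) (a b c : ι) (ds : Fin (m + 1) → ι) :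
    ∑ e : ι, chainK f K m e a ds * f c b e
      = (∑ j : Fin (m + 1), ∑ e : ι,
          chainK f K m b a (Function.update ds j e) * f c e (ds j))
        + ∑ e : ι, chainK f K m b e ds * f a c e := by
  simp only [chainK, neg_mul, Finset.sum_neg_distrib, ← neg_add]
  exact neg_inj.mpr (auxP f K hanti hjac hinv m a b c ds)

end
end

section
/- The closed-form one-loop coefficient f⁽¹⁾ defined by f⁽¹⁾(r,t;k,l) = Σ_{j=1}^{t¹}[m(r¹+t¹-j, r²+t²; k¹,k², l¹+1-j, l²) - m(t¹-j, t²; k¹-r¹, k²-r², l¹+1-j, l²)] - Σ_{j=1}^{t²} m(r¹, r²+t²-j; k¹, k², l¹-t¹, l²+1-j), where m(r;k,l) = θ(components ≥ 0)·r¹!r²!(1+k¹+k²)!(l¹+l²)!/(k¹!k²!l¹!l²!(1+r¹+r²)!), satisfies the antisymmetry f⁽¹⁾(r,t;k,l) = -f⁽¹⁾(t,r;l,k), for all integer tuples with k+l = r+t-(1,1). -/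
/-
Put `β(p, q) = p! q! / (p + q + 1)!`, Euler's `B(p + 1, q + 1)`. On natural arguments
`m(r; k, l) = β(r) / β(k) · C(l¹ + l², l²)`, so each `j`-sum in `f⁽¹⁾` is a difference
`E(L + 1) - E(L + 1 - c)` of partial sums
`E_{m,p,q}(N) = ∑_{s<N} C(s + m, m) β(p + s, q + m + 1) / β(p, q)`, a beta negative binomial
distribution function. Write `r = (a, b)`, `t = (c, d)`. Since `a + c = k¹ + l¹ + 1`, exactly one of
`a ≤ k¹`, `c ≤ l¹` holds, and likewise for the second components; this decides which differences
are complete or vanish, and in each case `f⁽¹⁾(r,t;k,l) + f⁽¹⁾(t,r;l,k) = 0` becomes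
a combination of the identities `E_{m,p,q}(n+1) + E_{n,q,p}(m+1) = 1` and
`E_{m,p,q}(n+1) + E_{q,n,m}(p+1) = 1`. The left side of each is symmetric under the evident swap
of parameters and, by a telescoping sum, invariant under `n ↦ n + 1`, so it
suffices to check `n = m = 0` (resp. `n = p = 0`).
-/

noncomputable section

/-- The closed-form building block `m(r; k, l)` (with the overall factor `1/(16π²)` dropped,
working over `ℚ`), extended by zero whenever any component of `r`, `k`, `l` is negative:
`m(r;k,l) = r¹! r²! (1+k¹+k²)! (l¹+l²)! / (k¹! k²! l¹! l²! (1+r¹+r²)!)`. -/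
def mFun (r k l : ℤ × ℤ) : ℚ :=
  if 0 ≤ r.1 ∧ 0 ≤ r.2 ∧ 0 ≤ k.1 ∧ 0 ≤ k.2 ∧ 0 ≤ l.1 ∧ 0 ≤ l.2 then
    ((Nat.factorial r.1.toNat : ℚ) * (Nat.factorial r.2.toNat : ℚ) *
        (Nat.factorial (1 + k.1 + k.2).toNat : ℚ) * (Nat.factorial (l.1 + l.2).toNat : ℚ)) /
      ((Nat.factorial k.1.toNat : ℚ) * (Nat.factorial k.2.toNat : ℚ) *
        (Nat.factorial l.1.toNat : ℚ) * (Nat.factorial l.2.toNat : ℚ) *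
        (Nat.factorial (1 + r.1 + r.2).toNat : ℚ))
  else 0

/-- The one-loop chiral algebra OPE coefficient `f⁽¹⁾(r,t;k,l)` (eq. (main_m1) of the paper,
with `1/(16π²)` dropped), extended by zero unless all components are nonnegative and
`k + l = r + t - (1,1)`.  Its specialization to `t = (1,0)` is exactly `m(r;k,l)`. -/
def fOne (r t k l : ℤ × ℤ) : ℚ :=
  if 0 ≤ r.1 ∧ 0 ≤ r.2 ∧ 0 ≤ t.1 ∧ 0 ≤ t.2 ∧ 0 ≤ k.1 ∧ 0 ≤ k.2 ∧ 0 ≤ l.1 ∧ 0 ≤ l.2 ∧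
      k.1 + l.1 = r.1 + t.1 - 1 ∧ k.2 + l.2 = r.2 + t.2 - 1 then
    (∑ j ∈ Finset.range t.1.toNat,
        (mFun (r.1 + t.1 - ((j : ℤ) + 1), r.2 + t.2) k (l.1 + 1 - ((j : ℤ) + 1), l.2)
          - mFun (t.1 - ((j : ℤ) + 1), t.2) (k.1 - r.1, k.2 - r.2) (l.1 + 1 - ((j : ℤ) + 1), l.2)))
    - ∑ j ∈ Finset.range t.2.toNat,
        mFun (r.1, r.2 + t.2 - ((j : ℤ) + 1)) k (l.1 - t.1, l.2 + 1 - ((j : ℤ) + 1))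
  else 0

open Finset Nat

def natBeta (p q : ℕ) : ℚ := (p ! * q ! : ℚ) / (p + q + 1)!

lemma natBeta_pos (p q : ℕ) : 0 < natBeta p q := by
  unfold natBeta
  positivity

lemma natBeta_comm (p q : ℕ) : natBeta p q = natBeta q p := by
  rw [natBeta, natBeta, mul_comm, add_comm p]

lemma natBeta_succ_left (p q : ℕ) :
    (p + q + 2 : ℚ) * natBeta (p + 1) q = (p + 1) * natBeta p q := by
  rw [natBeta, natBeta, show p + 1 + q + 1 = (p + q + 1) + 1 by ring, factorial_succ (p + q + 1),
    factorial_succ p]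
  push_cast
  field_simp
  ring

lemma natBeta_eq_add (p q : ℕ) : natBeta p q = natBeta (p + 1) q + natBeta p (q + 1) := by
  have hp := natBeta_succ_left p q
  have hq := natBeta_succ_left q p
  rw [natBeta_comm (q + 1), natBeta_comm q] at hq
  have h : (p + q + 2 : ℚ) ≠ 0 := by positivity
  apply mul_left_cancel₀ h
  linear_combination -hp - hq

lemma inv_natBeta (p q : ℕ) : (natBeta p q)⁻¹ = (p + 1) * (p + q + 1).choose q := by
  rw [natBeta, inv_div, show p + q + 1 = (p + 1) + q by ring, ← choose_symm_add, cast_add_choose,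
    factorial_succ]
  push_cast
  field_simp

lemma natBeta_zero_left (q : ℕ) : natBeta 0 q = ((q : ℚ) + 1)⁻¹ := by
  rw [← inv_inj, inv_inv, inv_natBeta]
  simp

lemma cast_choose_succ_mul (a b : ℕ) :
    ((a + b + 1).choose b : ℚ) * (a + 1) = (a + b).choose b * (a + b + 1) := by
  have h := choose_mul_succ_eq (a + b) b
  rw [show a + b + 1 - b = a + 1 by omega] at h
  exact_mod_cast h.symm

/-- `P(X < N)` for the beta negative binomial law: `X` counts the successes before the `(m+1)`-st
failure in Bernoulli trials whose success probability is `Beta(p+1, q+1)`-distributed. -/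
def betaNegBinCdf (m p q N : ℕ) : ℚ :=
  ∑ s ∈ range N, ((s + m).choose m : ℚ) * natBeta (p + s) (q + m + 1) / natBeta p q

lemma betaNegBinCdf_zero (m p q : ℕ) : betaNegBinCdf m p q 0 = 0 := by
  simp [betaNegBinCdf]

lemma betaNegBinCdf_succ (m p q N : ℕ) :
    betaNegBinCdf m p q (N + 1) =
      betaNegBinCdf m p q N + (N + m).choose m * natBeta (p + N) (q + m + 1) / natBeta p q :=
  sum_range_succ _ _

lemma betaNegBinCdf_succ_fst_sub (m p q N : ℕ) :
    betaNegBinCdf (m + 1) p q N - betaNegBinCdf m p q N =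
      -((N + m).choose (m + 1) : ℚ) * natBeta (p + N) (q + m + 1) / natBeta p q := by
  induction N with
  | zero => simp [betaNegBinCdf_zero]
  | succ N ih =>
    have hc : ((N + m + 1).choose (m + 1) : ℚ) = (N + m).choose m + (N + m).choose (m + 1) :=
      mod_cast choose_succ_succ' _ _
    have hb := natBeta_eq_add (p + N) (q + m + 1)
    rw [betaNegBinCdf_succ, betaNegBinCdf_succ, show N + 1 + m = N + m + 1 by ring]
    linear_combination ih + natBeta (p + N) (q + m + 1) / natBeta p q * hc
      - ((N + m + 1).choose (m + 1) : ℚ) / natBeta p q * hb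

lemma betaNegBinCdf_succ_snd_sub (m p q N : ℕ) :
    betaNegBinCdf m (p + 1) q N - betaNegBinCdf m p q N =
      -(N * (N + m).choose m : ℚ) * (p + q + 1).choose q * natBeta (p + N) (q + m + 1) := by
  induction N with
  | zero => simp [betaNegBinCdf_zero]
  | succ N ih =>
    have hβ := natBeta_succ_left (p + N) (q + m + 1)
    have hp := cast_choose_succ_mul (p + 1) q
    have hN := cast_choose_succ_mul N m
    rw [show p + 1 + q = p + q + 1 by ring] at hp
    push_cast at hβ hp hN
    rw [betaNegBinCdf_succ, betaNegBinCdf_succ, div_eq_mul_inv, div_eq_mul_inv, inv_natBeta,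
      inv_natBeta, show p + 1 + N = p + N + 1 by ring, show p + 1 + q = p + q + 1 by ring,
      show N + 1 + m = N + m + 1 by ring]
    push_cast
    linear_combination ih + ((N + m).choose m : ℚ) * natBeta (p + N + 1) (q + m + 1) * hp
      + natBeta (p + N + 1) (q + m + 1) * ((p + q + 1).choose q : ℚ) * hN
      + ((N + m).choose m : ℚ) * ((p + q + 1).choose q : ℚ) * hβ

/-- For a fixed success probability this is the problem of points: either `m + 1` failures or
`n + 1` successes come first. -/
lemma betaNegBinCdf_add_swap (m n p q : ℕ) :
    betaNegBinCdf m p q (n + 1) + betaNegBinCdf n q p (m + 1) = 1 := by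
  have shift : ∀ m n p q, betaNegBinCdf m p q (n + 1) + betaNegBinCdf n q p (m + 1) =
      betaNegBinCdf m p q 1 + betaNegBinCdf 0 q p (m + 1) := by
    intro m n p q
    induction n with
    | zero => rfl
    | succ n ih =>
      have h : betaNegBinCdf (n + 1) q p (m + 1) - betaNegBinCdf n q p (m + 1) =
          -((n + 1 + m).choose m : ℚ) * natBeta (p + n + 1) (q + m + 1) / natBeta p q := by
        rw [betaNegBinCdf_succ_fst_sub, show m + 1 + n = n + 1 + m by ring, choose_symm_add,
          natBeta_comm q, natBeta_comm (q + (m + 1))]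
        rfl
      rw [betaNegBinCdf_succ m p q (n + 1)]
      linear_combination ih + h
  rw [shift, add_comm, shift 0 m q p]
  simp only [betaNegBinCdf, zero_add, sum_range_one, add_zero, choose_self, cast_one, one_mul,
    natBeta_comm q]
  rw [← add_div, ← natBeta_eq_add, div_self (natBeta_pos p q).ne']

lemma betaNegBinCdf_add_cross (m n p q : ℕ) :
    betaNegBinCdf m p q (n + 1) + betaNegBinCdf q n m (p + 1) = 1 := by
  have shift : ∀ m n p q, betaNegBinCdf m p q (n + 1) + betaNegBinCdf q n m (p + 1) =
      betaNegBinCdf m p q 1 + betaNegBinCdf q 0 m (p + 1) := by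
    intro m n p q
    induction n with
    | zero => rfl
    | succ n ih =>
      have h : betaNegBinCdf q (n + 1) m (p + 1) - betaNegBinCdf q n m (p + 1) =
          -((p + 1) * (p + q + 1).choose q : ℚ) * (n + m + 1).choose m *
            natBeta (p + n + 1) (q + m + 1) := by
        rw [betaNegBinCdf_succ_snd_sub, show p + 1 + q = p + q + 1 by ring,
          show n + (p + 1) = p + n + 1 by ring, add_comm m q]
        push_cast
        rfl
      rw [betaNegBinCdf_succ m p q (n + 1), show n + 1 + m = n + m + 1 by ring, div_eq_mul_inv,
        inv_natBeta]
      linear_combination ih + h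
  rw [shift, add_comm, shift q p 0 m]
  simp only [betaNegBinCdf, range_one, zero_add, natBeta_zero_left, div_inv_eq_mul, sum_singleton,
    choose_self, cast_one, cast_add, one_mul]
  field_simp
  ring

lemma mFun_natCast (x₁ x₂ y₁ y₂ z₁ z₂ : ℕ) :
    mFun (x₁, x₂) (y₁, y₂) (z₁, z₂) = natBeta x₁ x₂ / natBeta y₁ y₂ * (z₁ + z₂).choose z₂ := by
  rw [mFun, if_pos (by simp), natBeta, natBeta, ← choose_symm_add, cast_add_choose]
  simp only [Int.toNat_natCast, show (1 + y₁ + y₂ : ℤ) = (y₁ + y₂ + 1 : ℕ) by push_cast; ring,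
    show (z₁ + z₂ : ℤ) = (z₁ + z₂ : ℕ) by push_cast; ring,
    show (1 + x₁ + x₂ : ℤ) = (x₁ + x₂ + 1 : ℕ) by push_cast; ring]
  field_simp

lemma mFun_swap (r k l : ℤ × ℤ) : mFun r.swap k.swap l.swap = mFun r k l := by
  simp only [mFun, Prod.fst_swap, Prod.snd_swap, add_right_comm (1 : ℤ) r.2,
    add_right_comm (1 : ℤ) k.2, add_comm l.2]
  congr 1
  · exact propext (by tauto)
  · ring

lemma sum_range_sub_eq_sub_of_neg (f : ℤ → ℚ) (hf : ∀ z < 0, f z = 0) (L c : ℕ) :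
    ∑ j ∈ range c, f (L - j) = ∑ s ∈ range (L + 1), f s - ∑ s ∈ range (L + 1 - c), f s := by
  induction c with
  | zero => simp
  | succ c ih =>
    rw [sum_range_succ, ih]
    rcases le_or_gt c L with hc | hc
    · rw [show L + 1 - c = L - c + 1 by omega, show L + 1 - (c + 1) = L - c by omega,
        sum_range_succ _ (L - c), show ((L - c : ℕ) : ℤ) = L - c by omega]
      ring
    · rw [hf _ (by omega), show L + 1 - c = 0 by omega, show L + 1 - (c + 1) = 0 by omega]
      ring

lemma sum_mFun_eq_betaNegBinCdf_sub (m p q L c : ℕ) :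
    ∑ j ∈ range c, mFun (p + (L - j), q + m + 1) (p, q) (L - j, m) =
      betaNegBinCdf m p q (L + 1) - betaNegBinCdf m p q (L + 1 - c) := by
  have hsum (N : ℕ) :
      ∑ s ∈ range N, mFun (p + s, q + m + 1) (p, q) (s, m) = betaNegBinCdf m p q N := by
    refine sum_congr rfl fun s _ => ?_
    rw [show ((p : ℤ) + s, (q : ℤ) + m + 1) = (((p + s : ℕ) : ℤ), ((q + m + 1 : ℕ) : ℤ)) by simp,
      mFun_natCast]
    ring
  rw [sum_range_sub_eq_sub_of_neg (fun z => mFun (p + z, q + m + 1) (p, q) (z, m)), hsum, hsum]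
  intro z hz
  exact if_neg (by dsimp only; omega)

lemma fOne_natCast (a b c d k₁ k₂ l₁ l₂ : ℕ) (h₁ : k₁ + l₁ + 1 = a + c) (h₂ : k₂ + l₂ + 1 = b + d) :
    fOne (a, b) (c, d) (k₁, k₂) (l₁, l₂) =
      (betaNegBinCdf l₂ k₁ k₂ (l₁ + 1) - betaNegBinCdf l₂ k₁ k₂ (l₁ + 1 - c))
      - (if a ≤ k₁ ∧ b ≤ k₂ then
          betaNegBinCdf l₂ (k₁ - a) (k₂ - b) (l₁ + 1)
            - betaNegBinCdf l₂ (k₁ - a) (k₂ - b) (l₁ + 1 - c)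
        else 0)
      - (if c ≤ l₁ then
          betaNegBinCdf (l₁ - c) k₂ k₁ (l₂ + 1) - betaNegBinCdf (l₁ - c) k₂ k₁ (l₂ + 1 - d)
        else 0) := by
  rw [fOne, if_pos (by dsimp only; omega)]
  simp only [Int.toNat_natCast, sum_sub_distrib]
  congr 2
  · rw [← sum_mFun_eq_betaNegBinCdf_sub]
    refine sum_congr rfl fun j _ => ?_
    congr 1 <;> ext <;> dsimp only <;> omega
  · split_ifs with h
    · rw [← sum_mFun_eq_betaNegBinCdf_sub]
      refine sum_congr rfl fun j _ => ?_
      congr 1 <;> ext <;> dsimp only <;> omega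
    · exact sum_eq_zero fun j _ => if_neg (by dsimp only; omega)
  · split_ifs with h
    · rw [← sum_mFun_eq_betaNegBinCdf_sub]
      refine sum_congr rfl fun j _ => ?_
      rw [← mFun_swap, Prod.swap_prod_mk, Prod.swap_prod_mk, Prod.swap_prod_mk]
      congr 1 <;> ext <;> dsimp only <;> omega
    · exact sum_eq_zero fun j _ => if_neg (by dsimp only; omega)

lemma fOne_add_fOne_swap_of_le_of_le (a b c d k₁ k₂ l₁ l₂ : ℕ) (h₁ : k₁ + l₁ + 1 = a + c)
    (h₂ : k₂ + l₂ + 1 = b + d) (ha : a ≤ k₁) (hb : b ≤ k₂) :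
    fOne (a, b) (c, d) (k₁, k₂) (l₁, l₂) + fOne (c, d) (a, b) (l₁, l₂) (k₁, k₂) = 0 := by
  rw [fOne_natCast a b c d k₁ k₂ l₁ l₂ h₁ h₂,
    fOne_natCast c d a b l₁ l₂ k₁ k₂ (by omega) (by omega),
    if_pos ⟨ha, hb⟩, if_neg (by omega), if_neg (by omega), if_pos ha, show l₁ + 1 - c = 0 by omega,
    show k₁ + 1 - a = k₁ - a + 1 by omega, show k₂ + 1 - b = k₂ - b + 1 by omega,
    betaNegBinCdf_zero, betaNegBinCdf_zero]
  linear_combination betaNegBinCdf_add_cross l₂ l₁ k₁ k₂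
    - betaNegBinCdf_add_cross l₂ l₁ (k₁ - a) (k₂ - b)
    - betaNegBinCdf_add_swap k₂ (k₁ - a) l₁ l₂ + betaNegBinCdf_add_swap (k₂ - b) (k₁ - a) l₁ l₂

lemma fOne_add_fOne_swap_of_le_of_lt (a b c d k₁ k₂ l₁ l₂ : ℕ) (h₁ : k₁ + l₁ + 1 = a + c)
    (h₂ : k₂ + l₂ + 1 = b + d) (ha : a ≤ k₁) (hb : k₂ < b) :
    fOne (a, b) (c, d) (k₁, k₂) (l₁, l₂) + fOne (c, d) (a, b) (l₁, l₂) (k₁, k₂) = 0 := by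
  rw [fOne_natCast a b c d k₁ k₂ l₁ l₂ h₁ h₂,
    fOne_natCast c d a b l₁ l₂ k₁ k₂ (by omega) (by omega),
    if_neg (by omega), if_neg (by omega), if_neg (by omega), if_pos ha,
    show l₁ + 1 - c = 0 by omega, show k₁ + 1 - a = k₁ - a + 1 by omega,
    show k₂ + 1 - b = 0 by omega, betaNegBinCdf_zero, betaNegBinCdf_zero]
  linear_combination betaNegBinCdf_add_cross l₂ l₁ k₁ k₂ - betaNegBinCdf_add_swap k₂ (k₁ - a) l₁ l₂

lemma fOne_add_fOne_swap_natCast (a b c d k₁ k₂ l₁ l₂ : ℕ) (h₁ : k₁ + l₁ + 1 = a + c)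
    (h₂ : k₂ + l₂ + 1 = b + d) :
    fOne (a, b) (c, d) (k₁, k₂) (l₁, l₂) + fOne (c, d) (a, b) (l₁, l₂) (k₁, k₂) = 0 := by
  rcases le_or_gt a k₁ with ha | ha <;> rcases le_or_gt b k₂ with hb | hb
  · exact fOne_add_fOne_swap_of_le_of_le _ _ _ _ _ _ _ _ h₁ h₂ ha hb
  · exact fOne_add_fOne_swap_of_le_of_lt _ _ _ _ _ _ _ _ h₁ h₂ ha hb
  · rw [add_comm]
    exact fOne_add_fOne_swap_of_le_of_lt _ _ _ _ _ _ _ _ (by omega) (by omega) (by omega) (by omega)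
  · rw [add_comm]
    exact fOne_add_fOne_swap_of_le_of_le _ _ _ _ _ _ _ _ (by omega) (by omega) (by omega) (by omega)

/-- Antisymmetry of the closed-form one-loop coefficient:
`f⁽¹⁾(r,t;k,l) = -f⁽¹⁾(t,r;l,k)` for all integer tuples with `k + l = r + t - (1,1)`. -/
theorem fOne_antisymm (r t k l : ℤ × ℤ)
    (h1 : k.1 + l.1 = r.1 + t.1 - 1) (h2 : k.2 + l.2 = r.2 + t.2 - 1) :
    fOne r t k l = - fOne t r l k := by
  obtain ⟨a, b⟩ := r
  obtain ⟨c, d⟩ := t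
  obtain ⟨k₁, k₂⟩ := k
  obtain ⟨l₁, l₂⟩ := l
  by_cases h : 0 ≤ a ∧ 0 ≤ b ∧ 0 ≤ c ∧ 0 ≤ d ∧ 0 ≤ k₁ ∧ 0 ≤ k₂ ∧ 0 ≤ l₁ ∧ 0 ≤ l₂
  · obtain ⟨ha, hb, hc, hd, hk₁, hk₂, hl₁, hl₂⟩ := h
    lift a to ℕ using ha
    lift b to ℕ using hb
    lift c to ℕ using hc
    lift d to ℕ using hd
    lift k₁ to ℕ using hk₁
    lift k₂ to ℕ using hk₂
    lift l₁ to ℕ using hl₁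
    lift l₂ to ℕ using hl₂
    linear_combination fOne_add_fOne_swap_natCast a b c d k₁ k₂ l₁ l₂ (by omega) (by omega)
  · rw [fOne, fOne, if_neg (by omega), if_neg (by omega), neg_zero]

end
end

section
/- The closed-form one-loop coefficient f⁽¹⁾(r,t;k,l) (as defined via the double sum over m(·)) satisfies the flavor-symmetry antisymmetry f⁽¹⁾((r¹,r²),(t¹,t²);(k¹,k²),(l¹,l²)) = -f⁽¹⁾((r²,r¹),(t²,t¹);(k²,k¹),(l²,l¹)), i.e., simultaneously swapping the two components of every tuple flips the sign. -/
noncomputable section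

/-! ### Auxiliary lemmas -/

private def mQ (A B K1 K2 E F : ℕ) : ℚ :=
  ((A.factorial * B.factorial * (1+K1+K2).factorial * (E+F).factorial : ℕ) : ℚ) /
  ((K1.factorial * K2.factorial * E.factorial * F.factorial * (1+A+B).factorial : ℕ) : ℚ)

private lemma key_nat_gen (K1 K2 p q : ℕ) :
    mQ (K1+p+1) (K2+q+2) K1 K2 (p+1) (q+1) + mQ (K1+p+2) (K2+q+1) K1 K2 (p+1) (q+1)
    = mQ (K1+p+1) (K2+q+1) K1 K2 (p+1) q + mQ (K1+p+1) (K2+q+1) K1 K2 p (q+1) := by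
  unfold mQ
  rw [show K1+p+2 = (K1+p+1)+1 from rfl, show K2+q+2 = (K2+q+1)+1 from rfl]
  rw [show p+1+(q+1) = (p+q+1)+1 from by ring, show p+1+q = p+q+1 from by ring,
      show p+(q+1) = p+q+1 from by ring]
  rw [show 1+(K1+p+1)+((K2+q+1)+1) = (1+(K1+p+1)+(K2+q+1))+1 from by ring,
      show 1+((K1+p+1)+1)+(K2+q+1) = (1+(K1+p+1)+(K2+q+1))+1 from by ring]
  simp only [Nat.factorial_succ, Nat.factorial_zero, Nat.add_zero, Nat.zero_add]
  push_cast
  rw [div_add_div _ _ (by positivity) (by positivity), div_add_div _ _ (by positivity) (by positivity),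
      div_eq_div_iff (by positivity) (by positivity)]
  ring

private lemma key_nat_q0 (K1 K2 p : ℕ) :
    mQ (K1+p+1) (K2+1) K1 K2 (p+1) 0 + mQ (K1+p+2) K2 K1 K2 (p+1) 0
    = mQ (K1+p+1) K2 K1 K2 p 0 := by
  unfold mQ
  rw [show K1+p+2 = (K1+p+1)+1 from rfl]
  rw [show 1+(K1+p+1)+(K2+1) = (1+(K1+p+1)+K2)+1 from by ring,
      show 1+((K1+p+1)+1)+K2 = (1+(K1+p+1)+K2)+1 from by ring,
      show p+1+0 = p+1 from by ring, show (p:ℕ)+0 = p from by ring]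
  simp only [Nat.factorial_succ, Nat.factorial_zero, Nat.add_zero, Nat.zero_add]
  push_cast
  rw [div_add_div _ _ (by positivity) (by positivity), div_eq_div_iff (by positivity) (by positivity)]
  ring

private lemma key_nat_p0 (K1 K2 q : ℕ) :
    mQ K1 (K2+q+2) K1 K2 0 (q+1) + mQ (K1+1) (K2+q+1) K1 K2 0 (q+1)
    = mQ K1 (K2+q+1) K1 K2 0 q := by
  unfold mQ
  rw [show K2+q+2 = (K2+q+1)+1 from rfl]
  rw [show 1+K1+((K2+q+1)+1) = (1+K1+(K2+q+1))+1 from by ring,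
      show 1+(K1+1)+(K2+q+1) = (1+K1+(K2+q+1))+1 from by ring,
      show (0:ℕ)+(q+1) = q+1 from by ring, show (0:ℕ)+q = q from by ring]
  simp only [Nat.factorial_succ, Nat.factorial_zero, Nat.add_zero, Nat.zero_add]
  push_cast
  rw [div_add_div _ _ (by positivity) (by positivity), div_eq_div_iff (by positivity) (by positivity)]
  ring

private lemma key_nat_00 (K1 K2 : ℕ) :
    mQ K1 (K2+1) K1 K2 0 0 + mQ (K1+1) K2 K1 K2 0 0 = 1 := by
  unfold mQ
  rw [show 1+K1+(K2+1) = (1+K1+K2)+1 from by ring,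
      show 1+(K1+1)+K2 = (1+K1+K2)+1 from by ring]
  simp only [Nat.factorial_succ, Nat.factorial_zero, Nat.add_zero, Nat.zero_add]
  push_cast
  rw [div_add_div _ _ (by positivity) (by positivity), div_eq_one_iff_eq (by positivity)]
  ring

private lemma mFun_neg (a b c d e f : ℤ)
    (h : ¬(0 ≤ a ∧ 0 ≤ b ∧ 0 ≤ c ∧ 0 ≤ d ∧ 0 ≤ e ∧ 0 ≤ f)) :
    mFun (a,b) (c,d) (e,f) = 0 := by
  rw [mFun, if_neg h]

private lemma mFun_eq_mQ (a b c d e f : ℤ)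
    (h : 0 ≤ a ∧ 0 ≤ b ∧ 0 ≤ c ∧ 0 ≤ d ∧ 0 ≤ e ∧ 0 ≤ f) :
    mFun (a,b) (c,d) (e,f) = mQ a.toNat b.toNat c.toNat d.toNat e.toNat f.toNat := by
  obtain ⟨h1,h2,h3,h4,h5,h6⟩ := h
  rw [mFun, if_pos ⟨h1,h2,h3,h4,h5,h6⟩, mQ]
  rw [show (1 + c + d).toNat = 1 + c.toNat + d.toNat from by omega,
      show (e + f).toNat = e.toNat + f.toNat from by omega,
      show (1 + a + b).toNat = 1 + a.toNat + b.toNat from by omega]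
  push_cast
  ring

private lemma mFun_swap_s12 (a b c d e f : ℤ) :
    mFun (b,a) (d,c) (f,e) = mFun (a,b) (c,d) (e,f) := by
  rw [mFun, mFun]
  by_cases h : 0 ≤ a ∧ 0 ≤ b ∧ 0 ≤ c ∧ 0 ≤ d ∧ 0 ≤ e ∧ 0 ≤ f
  · rw [if_pos (show _ from by exact ⟨h.2.1, h.1, h.2.2.2.1, h.2.2.1, h.2.2.2.2.2, h.2.2.2.2.1⟩),
        if_pos (show _ from h)]
    rw [show ((1:ℤ) + d + c) = 1 + c + d from by ring, show ((f:ℤ) + e) = e + f from by ring]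
    ring
  · rw [if_neg (show _ from by dsimp only; tauto), if_neg (show _ from h)]

private lemma key_int (a b k1 k2 : ℤ) :
    mFun (a, b+1) (k1,k2) (a-k1, b-k2) + mFun (a+1, b) (k1,k2) (a-k1, b-k2)
    = mFun (a,b) (k1,k2) (a-k1, b-1-k2) + mFun (a,b) (k1,k2) (a-1-k1, b-k2)
      + (if a = k1 ∧ b = k2 ∧ 0 ≤ k1 ∧ 0 ≤ k2 then 1 else 0) := by
  by_cases hc : 0 ≤ k1 ∧ 0 ≤ k2 ∧ k1 ≤ a ∧ k2 ≤ b
  · obtain ⟨h1,h2,h3,h4⟩ := hc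
    obtain ⟨K1, rfl⟩ : ∃ n:ℕ, k1 = (n:ℤ) := ⟨k1.toNat, by omega⟩
    obtain ⟨K2, rfl⟩ : ∃ n:ℕ, k2 = (n:ℤ) := ⟨k2.toNat, by omega⟩
    obtain ⟨P, rfl⟩ : ∃ n:ℕ, a = (K1:ℤ) + (n:ℤ) := ⟨(a-K1).toNat, by omega⟩
    obtain ⟨Q, rfl⟩ : ∃ n:ℕ, b = (K2:ℤ) + (n:ℤ) := ⟨(b-K2).toNat, by omega⟩
    rcases P with _ | p <;> rcases Q with _ | q
    · rw [mFun_eq_mQ _ _ _ _ _ _ (by omega), mFun_eq_mQ _ _ _ _ _ _ (by omega),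
          mFun_neg _ _ _ _ _ _ (by omega), mFun_neg _ _ _ _ _ _ (by omega),
          if_pos ⟨by omega, by omega, by omega, by omega⟩]
      simp only [zero_add, add_zero]
      convert key_nat_00 K1 K2 using 9 <;> omega
    · rw [mFun_eq_mQ _ _ _ _ _ _ (by omega), mFun_eq_mQ _ _ _ _ _ _ (by omega),
          mFun_eq_mQ _ _ _ _ _ _ (by omega), mFun_neg _ _ _ _ _ _ (by omega),
          if_neg (by omega)]
      simp only [zero_add, add_zero]
      convert key_nat_p0 K1 K2 q using 9 <;> omega
    · rw [mFun_eq_mQ _ _ _ _ _ _ (by omega), mFun_eq_mQ _ _ _ _ _ _ (by omega),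
          mFun_neg _ _ _ _ _ _ (by omega), mFun_eq_mQ _ _ _ _ _ _ (by omega),
          if_neg (by omega)]
      simp only [zero_add, add_zero]
      convert key_nat_q0 K1 K2 p using 9 <;> omega
    · rw [mFun_eq_mQ _ _ _ _ _ _ (by omega), mFun_eq_mQ _ _ _ _ _ _ (by omega),
          mFun_eq_mQ _ _ _ _ _ _ (by omega), mFun_eq_mQ _ _ _ _ _ _ (by omega),
          if_neg (by omega)]
      simp only [add_zero]
      convert key_nat_gen K1 K2 p q using 9 <;> omega
  · rw [mFun_neg _ _ _ _ _ _ (by omega), mFun_neg _ _ _ _ _ _ (by omega),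
        mFun_neg _ _ _ _ _ _ (by omega), mFun_neg _ _ _ _ _ _ (by omega),
        if_neg (by omega)]
    norm_num

private lemma green (G H D : ℤ → ℤ → ℚ)
    (hkey : ∀ a b, G a (b+1) + H (a+1) b = G a b + H a b + D a b)
    (a0 b0 : ℤ) (m n : ℕ) :
    (∑ i ∈ Finset.range m, G (a0+i) (b0+n)) + (∑ j ∈ Finset.range n, H (a0+m) (b0+j))
    = (∑ i ∈ Finset.range m, G (a0+i) b0) + (∑ j ∈ Finset.range n, H a0 (b0+j))
      + ∑ i ∈ Finset.range m, ∑ j ∈ Finset.range n, D (a0+i) (b0+j) := by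
  induction n with
  | zero => simp
  | succ n ih =>
    have tele : ∀ b : ℤ, ∑ i ∈ Finset.range m, (H (a0+i) b - H (a0+i+1) b)
        = H a0 b - H (a0+m) b := by
      intro b
      have h := Finset.sum_range_sub' (fun i : ℕ => H (a0+(i:ℤ)) b) m
      simpa [← add_assoc] using h
    have hG : ∀ b : ℤ, (∑ i ∈ Finset.range m, G (a0+i) (b+1))
        = (∑ i ∈ Finset.range m, G (a0+i) b) + (∑ i ∈ Finset.range m, D (a0+i) b)
          + (H a0 b - H (a0+m) b) := by
      intro b
      rw [← tele b, ← Finset.sum_add_distrib, ← Finset.sum_add_distrib]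
      refine Finset.sum_congr rfl fun i _ => ?_
      have := hkey (a0+i) b
      linarith
    have hcast : (b0 + ((n+1 : ℕ) : ℤ)) = (b0 + n) + 1 := by push_cast; ring
    rw [hcast]
    simp only [Finset.sum_range_succ]
    rw [hG (b0 + n)]
    have : (∑ i ∈ Finset.range m, ∑ j ∈ Finset.range n, D (a0+i) (b0+j))
         + (∑ i ∈ Finset.range m, D (a0+i) (b0+n))
         = ∑ i ∈ Finset.range m, ((∑ j ∈ Finset.range n, D (a0+i) (b0+j)) + D (a0+i) (b0+n)) := by
      rw [Finset.sum_add_distrib]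
    linarith [ih]

private lemma sum_ind (c : ℚ) (P : Prop) [Decidable P] (a0 k : ℤ) (m : ℕ) :
    ∑ i ∈ Finset.range m, (if a0 + (i:ℤ) = k ∧ P then c else 0)
    = if a0 ≤ k ∧ k < a0 + m ∧ P then c else 0 := by
  induction m with
  | zero =>
    simp only [Finset.range_zero, Finset.sum_empty]
    rw [if_neg]
    rintro ⟨h1, h2, -⟩
    omega
  | succ m ih =>
    rw [Finset.sum_range_succ, ih]
    by_cases hP : P
    · simp only [and_iff_left hP]
      split_ifs <;> (first | ring1 | (exfalso; omega))
    · simp [hP]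

private lemma sum_ind2 (c : ℚ) (P : Prop) [Decidable P] (a0 b0 k1 k2 : ℤ) (m n : ℕ) :
    ∑ i ∈ Finset.range m, ∑ j ∈ Finset.range n,
        (if a0 + (i:ℤ) = k1 ∧ b0 + (j:ℤ) = k2 ∧ P then c else 0)
    = if a0 ≤ k1 ∧ k1 < a0 + m ∧ b0 ≤ k2 ∧ k2 < b0 + n ∧ P then c else 0 := by
  have inner : ∀ i : ℕ, ∑ j ∈ Finset.range n,
      (if a0 + (i:ℤ) = k1 ∧ b0 + (j:ℤ) = k2 ∧ P then c else 0)
      = if a0 + (i:ℤ) = k1 ∧ (b0 ≤ k2 ∧ k2 < b0 + n ∧ P) then c else 0 := by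
    intro i
    have : ∀ j : ℕ, (if a0 + (i:ℤ) = k1 ∧ b0 + (j:ℤ) = k2 ∧ P then c else 0)
        = if b0 + (j:ℤ) = k2 ∧ (a0 + (i:ℤ) = k1 ∧ P) then c else 0 := fun j =>
      if_congr (by tauto) rfl rfl
    rw [Finset.sum_congr rfl fun j _ => this j, sum_ind c _ b0 k2 n]
    exact if_congr (by tauto) rfl rfl
  rw [Finset.sum_congr rfl fun i _ => inner i, sum_ind c _ a0 k1 m]

private lemma sum_shift_reflect (F : ℤ → ℚ) (c : ℤ) (n : ℕ) :
    ∑ j ∈ Finset.range n, F (c - ((j:ℤ)+1)) = ∑ i ∈ Finset.range n, F ((c - n) + (i:ℤ)) := by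
  rw [← Finset.sum_range_reflect (fun i => F ((c - n) + (i:ℤ))) n]
  refine Finset.sum_congr rfl fun j hj => ?_
  have hj' := Finset.mem_range.mp hj
  congr 1
  omega

private lemma sum_to_green (F : ℤ → ℚ) (c a0 : ℤ) (n : ℕ) (h : c - (n:ℤ) = a0)
    (body : ℕ → ℚ) (hbody : ∀ j ∈ Finset.range n, body j = F (c - ((j:ℤ)+1))) :
    ∑ j ∈ Finset.range n, body j = ∑ i ∈ Finset.range n, F (a0 + (i:ℤ)) := by
  rw [Finset.sum_congr rfl hbody, sum_shift_reflect, h]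

/-- Flavor-symmetry antisymmetry of the closed-form one-loop coefficient:
simultaneously swapping the two components of every tuple flips the sign,
`f⁽¹⁾((r¹,r²),(t¹,t²);(k¹,k²),(l¹,l²)) = -f⁽¹⁾((r²,r¹),(t²,t¹);(k²,k¹),(l²,l¹))`. -/
theorem fOne_flavor_antisymm (r t k l : ℤ × ℤ) :
    fOne r t k l = - fOne (r.2, r.1) (t.2, t.1) (k.2, k.1) (l.2, l.1) := by
  obtain ⟨r1, r2⟩ := r
  obtain ⟨t1, t2⟩ := t
  obtain ⟨k1, k2⟩ := k
  obtain ⟨l1, l2⟩ := l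
  simp only [fOne]
  by_cases h : 0 ≤ r1 ∧ 0 ≤ r2 ∧ 0 ≤ t1 ∧ 0 ≤ t2 ∧ 0 ≤ k1 ∧ 0 ≤ k2 ∧ 0 ≤ l1 ∧ 0 ≤ l2 ∧
      k1 + l1 = r1 + t1 - 1 ∧ k2 + l2 = r2 + t2 - 1
  swap
  · rw [if_neg (show _ from by omega), if_neg (show _ from by omega)]
    norm_num
  obtain ⟨h1, h2, h3, h4, h5, h6, h7, h8, h9, h10⟩ := h
  rw [if_pos (show _ from by omega), if_pos (show _ from by omega)]
  set T1 := t1.toNat with hT1def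
  set T2 := t2.toNat with hT2def
  have hT1 : (T1:ℤ) = t1 := Int.toNat_of_nonneg h3
  have hT2 : (T2:ℤ) = t2 := Int.toNat_of_nonneg h4
  -- canonical edge functions
  -- six sum conversions
  have hA : (∑ j ∈ Finset.range T1, mFun (r1 + t1 - ((j:ℤ)+1), r2 + t2) (k1, k2) (l1 + 1 - ((j:ℤ)+1), l2))
      = ∑ i ∈ Finset.range T1, mFun (r1+(i:ℤ), r2+t2) (k1,k2) (r1+(i:ℤ)-k1, r2+t2-1-k2) := by
    refine sum_to_green (fun x => mFun (x, r2+t2) (k1,k2) (x-k1, r2+t2-1-k2)) (r1+t1) r1 T1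
      (by omega) _ (fun j hj => ?_)
    beta_reduce
    congr 1 <;> (rw [Prod.mk.injEq]; exact ⟨by omega, by omega⟩)
  have hB : (∑ j ∈ Finset.range T1, mFun (t1 - ((j:ℤ)+1), t2) (k1-r1, k2-r2) (l1 + 1 - ((j:ℤ)+1), l2))
      = ∑ i ∈ Finset.range T1, mFun (0+(i:ℤ), 0+t2) (k1-r1,k2-r2) (0+(i:ℤ)-(k1-r1), 0+t2-1-(k2-r2)) := by
    refine sum_to_green (fun x => mFun (x, 0+t2) (k1-r1,k2-r2) (x-(k1-r1), 0+t2-1-(k2-r2))) t1 0 T1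
      (by omega) _ (fun j hj => ?_)
    beta_reduce
    congr 1 <;> (rw [Prod.mk.injEq]; exact ⟨by omega, by omega⟩)
  have hC : (∑ j ∈ Finset.range T2, mFun (r1, r2 + t2 - ((j:ℤ)+1)) (k1, k2) (l1 - t1, l2 + 1 - ((j:ℤ)+1)))
      = ∑ j ∈ Finset.range T2, mFun (r1, r2+(j:ℤ)) (k1,k2) (r1-1-k1, r2+(j:ℤ)-k2) := by
    refine sum_to_green (fun x => mFun (r1, x) (k1,k2) (r1-1-k1, x-k2)) (r2+t2) r2 T2
      (by omega) _ (fun j hj => ?_)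
    beta_reduce
    congr 1 <;> (rw [Prod.mk.injEq]; exact ⟨by omega, by omega⟩)
  have hA' : (∑ j ∈ Finset.range T2, mFun (r2 + t2 - ((j:ℤ)+1), r1 + t1) (k2, k1) (l2 + 1 - ((j:ℤ)+1), l1))
      = ∑ j ∈ Finset.range T2, mFun (r1+t1, r2+(j:ℤ)) (k1,k2) (r1+t1-1-k1, r2+(j:ℤ)-k2) := by
    refine sum_to_green (fun x => mFun (r1+t1, x) (k1,k2) (r1+t1-1-k1, x-k2)) (r2+t2) r2 T2
      (by omega) _ (fun j hj => ?_)
    rw [mFun_swap_s12]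
    beta_reduce
    congr 1 <;> (rw [Prod.mk.injEq]; exact ⟨by omega, by omega⟩)
  have hB' : (∑ j ∈ Finset.range T2, mFun (t2 - ((j:ℤ)+1), t1) (k2-r2, k1-r1) (l2 + 1 - ((j:ℤ)+1), l1))
      = ∑ j ∈ Finset.range T2, mFun (0+t1, 0+(j:ℤ)) (k1-r1,k2-r2) (0+t1-1-(k1-r1), 0+(j:ℤ)-(k2-r2)) := by
    refine sum_to_green (fun x => mFun (0+t1, x) (k1-r1,k2-r2) (0+t1-1-(k1-r1), x-(k2-r2))) t2 0 T2
      (by omega) _ (fun j hj => ?_)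
    rw [mFun_swap_s12]
    beta_reduce
    congr 1 <;> (rw [Prod.mk.injEq]; exact ⟨by omega, by omega⟩)
  have hC' : (∑ j ∈ Finset.range T1, mFun (r2, r1 + t1 - ((j:ℤ)+1)) (k2, k1) (l2 - t2, l1 + 1 - ((j:ℤ)+1)))
      = ∑ i ∈ Finset.range T1, mFun (r1+(i:ℤ), r2) (k1,k2) (r1+(i:ℤ)-k1, r2-1-k2) := by
    refine sum_to_green (fun x => mFun (x, r2) (k1,k2) (x-k1, r2-1-k2)) (r1+t1) r1 T1
      (by omega) _ (fun j hj => ?_)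
    rw [mFun_swap_s12]
    beta_reduce
    congr 1 <;> (rw [Prod.mk.injEq]; exact ⟨by omega, by omega⟩)
  -- Green's identities
  have g1 := green (fun a b => mFun (a,b) (k1,k2) (a-k1, b-1-k2))
      (fun a b => mFun (a,b) (k1,k2) (a-1-k1, b-k2))
      (fun a b => if a = k1 ∧ b = k2 ∧ 0 ≤ k1 ∧ 0 ≤ k2 then (1:ℚ) else 0)
      (fun a b => by
        beta_reduce
        rw [show a+1-1-k1 = a-k1 from by ring, show b+1-1-k2 = b-k2 from by ring]
        exact key_int a b k1 k2)
      r1 r2 T1 T2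
  have g2 := green (fun a b => mFun (a,b) (k1-r1,k2-r2) (a-(k1-r1), b-1-(k2-r2)))
      (fun a b => mFun (a,b) (k1-r1,k2-r2) (a-1-(k1-r1), b-(k2-r2)))
      (fun a b => if a = k1-r1 ∧ b = k2-r2 ∧ 0 ≤ k1-r1 ∧ 0 ≤ k2-r2 then (1:ℚ) else 0)
      (fun a b => by
        beta_reduce
        rw [show a+1-1-(k1-r1) = a-(k1-r1) from by ring,
            show b+1-1-(k2-r2) = b-(k2-r2) from by ring]
        exact key_int a b (k1-r1) (k2-r2))
      0 0 T1 T2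
  beta_reduce at g1 g2
  rw [sum_ind2] at g1 g2
  rw [hT1, hT2] at g1 g2
  -- the two boundary sums in g2 vanish
  have z1 : (∑ i ∈ Finset.range T1, mFun (0+(i:ℤ), 0) (k1-r1,k2-r2) (0+(i:ℤ)-(k1-r1), 0-1-(k2-r2))) = 0 :=
    Finset.sum_eq_zero fun i _ => mFun_neg _ _ _ _ _ _ (by omega)
  have z2 : (∑ j ∈ Finset.range T2, mFun (0, 0+(j:ℤ)) (k1-r1,k2-r2) (0-1-(k1-r1), 0+(j:ℤ)-(k2-r2))) = 0 :=
    Finset.sum_eq_zero fun j _ => mFun_neg _ _ _ _ _ _ (by omega)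
  -- the two delta indicators agree
  have hD : (if r1 ≤ k1 ∧ k1 < r1 + t1 ∧ r2 ≤ k2 ∧ k2 < r2 + t2 ∧ (0 ≤ k1 ∧ 0 ≤ k2) then (1:ℚ) else 0)
      = (if 0 ≤ k1-r1 ∧ k1-r1 < 0 + t1 ∧ 0 ≤ k2-r2 ∧ k2-r2 < 0 + t2 ∧ (0 ≤ k1-r1 ∧ 0 ≤ k2-r2) then (1:ℚ) else 0) :=
    if_congr (by omega) rfl rfl
  rw [Finset.sum_sub_distrib, Finset.sum_sub_distrib, hA, hB, hC, hA', hB', hC']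
  linarith [g1, g2, z1, z2, hD]

end
end
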